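/- For all z, w ∈ ℍ with Im(w) ≤ Im(z)/4, one has 0 ≤ log(|z − w̄| / |z − w|) ≤ 4 · Im(w) / Im(z), where w̄ denotes the complex conjugate of w. -/

import Mathlib

/-!
Writing `a = ‖z - w̄‖` and `b = ‖z - w‖`, one has `a² = b² + 4 Im z Im w`, so `a ≥ b` and
`log (a / b) = ½ log (a² / b²) ≤ ½ (a² / b² - 1) = 2 Im z Im w / b²`.
Since `b ≥ Im z - Im w ≥ ¾ Im z`, this is at most `(32 / 9) Im w / Im z ≤ 4 Im w / Im z`.
-/

open ComplexConjugate

theorem Complex.norm_sub_conj_sq (z w : ℂ) :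
    ‖z - conj w‖ ^ 2 = ‖z - w‖ ^ 2 + 4 * z.im * w.im := by
  simp only [Complex.sq_norm, Complex.normSq_apply, Complex.sub_re, Complex.sub_im,
    Complex.conj_re, Complex.conj_im]
  ring

theorem Complex.im_sub_im_le_norm_sub (z w : ℂ) : z.im - w.im ≤ ‖z - w‖ :=
  (le_abs_self _).trans <| by simpa using Complex.abs_im_le_norm (z - w)

theorem Real.log_div_le_sq_sub_sq_div {a b : ℝ} (ha : 0 < a) (hb : 0 < b) :
    Real.log (a / b) ≤ (a ^ 2 - b ^ 2) / (2 * b ^ 2) := by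
  have hlog : Real.log (a / b) = Real.log ((a / b) ^ 2) / 2 := by
    rw [Real.log_pow]; push_cast; ring
  have hsq : (a / b) ^ 2 - 1 = (a ^ 2 - b ^ 2) / b ^ 2 := by
    field_simp
  rw [hlog, mul_comm, ← div_div, ← hsq]
  gcongr
  exact Real.log_le_sub_one_of_pos (by positivity)

theorem green_bound_small_im (z w : ℂ) (hz : 0 < z.im) (hw : 0 < w.im)
    (h : w.im ≤ z.im / 4) :
    0 ≤ Real.log (‖z - conj w‖ / ‖z - w‖) ∧
      Real.log (‖z - conj w‖ / ‖z - w‖) ≤ 4 * w.im / z.im := by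
  have hsq := Complex.norm_sub_conj_sq z w
  have hb : 3 / 4 * z.im ≤ ‖z - w‖ := by linarith [Complex.im_sub_im_le_norm_sub z w]
  have hb_pos : 0 < ‖z - w‖ := by linarith
  have hba : ‖z - w‖ ≤ ‖z - conj w‖ :=
    pow_le_pow_iff_left₀ (norm_nonneg _) (norm_nonneg _) two_ne_zero |>.mp <| by
      nlinarith [mul_pos hz hw]
  refine ⟨Real.log_nonneg <| (one_le_div hb_pos).mpr hba, ?_⟩
  calc Real.log (‖z - conj w‖ / ‖z - w‖)
      ≤ (‖z - conj w‖ ^ 2 - ‖z - w‖ ^ 2) / (2 * ‖z - w‖ ^ 2) :=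
        Real.log_div_le_sq_sub_sq_div (hb_pos.trans_le hba) hb_pos
    _ = 2 * z.im * w.im / ‖z - w‖ ^ 2 := by rw [hsq]; field_simp; ring
    _ ≤ 4 * w.im / z.im := by
        rw [div_le_div_iff₀ (by positivity) hz]
        nlinarith [mul_le_mul_of_nonneg_left (pow_le_pow_left₀ (by positivity) hb 2) hw.le]
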